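/- Conversely, any complex subspace L ⊂ (V ⊕ V*) ⊗ ℂ that is maximal isotropic for the natural pairing and satisfies L ∩ L̄ = 0 is the +i eigenspace of a unique orthogonal endomorphism J of V ⊕ V* with J² = −1. -/

import Mathlib

/- STATEMENT 5: Any complex subspace L ⊂ (V ⊕ V*) ⊗ ℂ which is maximal
   isotropic for the (complex-bilinearly extended) natural pairing and
   satisfies L ∩ L̄ = 0 is the +i eigenspace of a unique orthogonal
   endomorphism J of V ⊕ V* with J² = −1. -/

open Module
open scoped TensorProduct

noncomputable section

def naturalPairing (V : Type*) [AddCommGroup V] [Module ℝ V] :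
    LinearMap.BilinForm ℝ (V × Module.Dual ℝ V) :=
  LinearMap.mk₂ ℝ (fun v w => (v.2 w.1 + w.2 v.1) / 2)
    (by intro m₁ m₂ n; simp [map_add]; ring)
    (by intro c m n; simp; ring)
    (by intro m n₁ n₂; simp [map_add]; ring)
    (by intro c m n; simp; ring)

/-- The complexification `(V ⊕ V*) ⊗ ℂ`. -/
def WC (V : Type*) [AddCommGroup V] [Module ℝ V] : Type _ :=
  ℂ ⊗[ℝ] (V × Module.Dual ℝ V)

instance (V : Type*) [AddCommGroup V] [Module ℝ V] : AddCommGroup (WC V) :=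
  TensorProduct.addCommGroup

instance (V : Type*) [AddCommGroup V] [Module ℝ V] : Module ℂ (WC V) :=
  TensorProduct.leftModule

instance (V : Type*) [AddCommGroup V] [Module ℝ V] : Module ℝ (WC V) := by
  unfold WC; infer_instance

def naturalPairingC (V : Type*) [AddCommGroup V] [Module ℝ V] :
    LinearMap.BilinForm ℂ (WC V) :=
  (naturalPairing V).baseChange ℂ

def cplx {V : Type*} [AddCommGroup V] [Module ℝ V]
    (J : (V × Module.Dual ℝ V) →ₗ[ℝ] (V × Module.Dual ℝ V)) : WC V →ₗ[ℂ] WC V :=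
  LinearMap.baseChange ℂ J

def conjW (V : Type*) [AddCommGroup V] [Module ℝ V] : WC V →ₗ[ℝ] WC V :=
  LinearMap.rTensor (V × Module.Dual ℝ V) (Complex.conjAe.toLinearMap : ℂ →ₗ[ℝ] ℂ)

/-! Since `dim L = dim V` is half the dimension of `(V ⊕ V*) ⊗ ℂ` and `L ∩ L̄ = 0`, the
complexification splits as `L ⊕ L̄`. The map acting by `i` on `L` and by `-i` on `L̄` commutes
with conjugation, hence is the complexification of a real `J`; then `J² = -1`, and `J` is
orthogonal because both `L` and `L̄` are isotropic. Conversely, the complexification of any `J`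
with `+i` eigenspace `L` commutes with conjugation, so it acts by `-i` on `L̄`; this pins it down. -/

open Complex

section ComplexStructure

variable {E : Type*} [AddCommGroup E] [Module ℂ E] {L M : Submodule ℂ E}

def complexStructureOfIsCompl (h : IsCompl L M) : E →ₗ[ℂ] E :=
  LinearMap.ofIsCompl h (I • L.subtype) (-I • M.subtype)

variable (h : IsCompl L M)

theorem complexStructureOfIsCompl_of_mem_left {x : E} (hx : x ∈ L) :
    complexStructureOfIsCompl h x = I • x :=
  LinearMap.ofIsCompl_apply_left h ⟨x, hx⟩

theorem complexStructureOfIsCompl_of_mem_right {x : E} (hx : x ∈ M) :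
    complexStructureOfIsCompl h x = -I • x :=
  LinearMap.ofIsCompl_apply_right h ⟨x, hx⟩

theorem eq_complexStructureOfIsCompl {S : E →ₗ[ℂ] E} (hL : ∀ x ∈ L, S x = I • x)
    (hM : ∀ x ∈ M, S x = -I • x) : S = complexStructureOfIsCompl h :=
  LinearMap.ext_on_codisjoint h.codisjoint
    (fun x hx => by rw [hL x hx, complexStructureOfIsCompl_of_mem_left h hx])
    (fun x hx => by rw [hM x hx, complexStructureOfIsCompl_of_mem_right h hx])

theorem complexStructureOfIsCompl_apply_apply (x : E) :
    complexStructureOfIsCompl h (complexStructureOfIsCompl h x) = -x := by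
  obtain ⟨a, b, ha, hb, rfl⟩ := Submodule.codisjoint_iff_exists_add_eq.1 h.codisjoint x
  simp only [map_add, map_smul, complexStructureOfIsCompl_of_mem_left h ha,
    complexStructureOfIsCompl_of_mem_right h hb]
  match_scalars <;> simp

theorem mem_iff_complexStructureOfIsCompl_eq (x : E) :
    x ∈ L ↔ complexStructureOfIsCompl h x = I • x := by
  refine ⟨complexStructureOfIsCompl_of_mem_left h, fun hx => ?_⟩
  obtain ⟨a, b, ha, hb, rfl⟩ := Submodule.codisjoint_iff_exists_add_eq.1 h.codisjoint x
  rw [map_add, complexStructureOfIsCompl_of_mem_left h ha,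
    complexStructureOfIsCompl_of_mem_right h hb] at hx
  have hb0 : (2 * I) • b = 0 := by linear_combination (norm := module) -hx
  rw [(smul_eq_zero.1 hb0).resolve_left (by simp), add_zero]
  exact ha

theorem complexStructureOfIsCompl_isometry {F : Type*} [AddCommGroup F] [Module ℂ F]
    (B : E →ₗ[ℂ] E →ₗ[ℂ] F) (hL : ∀ x ∈ L, ∀ y ∈ L, B x y = 0)
    (hM : ∀ x ∈ M, ∀ y ∈ M, B x y = 0) (x y : E) :
    B (complexStructureOfIsCompl h x) (complexStructureOfIsCompl h y) = B x y := by
  obtain ⟨a, b, ha, hb, rfl⟩ := Submodule.codisjoint_iff_exists_add_eq.1 h.codisjoint x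
  obtain ⟨a', b', ha', hb', rfl⟩ := Submodule.codisjoint_iff_exists_add_eq.1 h.codisjoint y
  simp only [map_add, LinearMap.add_apply, map_smul, LinearMap.smul_apply,
    complexStructureOfIsCompl_of_mem_left h ha, complexStructureOfIsCompl_of_mem_right h hb,
    complexStructureOfIsCompl_of_mem_left h ha', complexStructureOfIsCompl_of_mem_right h hb',
    hL a ha a' ha', hM b hb b' hb', smul_zero]
  match_scalars <;> simp

end ComplexStructure

namespace Complexification

variable {W : Type*} [AddCommGroup W] [Module ℝ W]

def conj : ℂ ⊗[ℝ] W →ₛₗ[starRingEnd ℂ] ℂ ⊗[ℝ] W where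
  toFun := (conjAe.toLinearMap : ℂ →ₗ[ℝ] ℂ).rTensor W
  map_add' := map_add _
  map_smul' c x := by
    induction x with
    | zero => simp
    | tmul d w => simp [TensorProduct.smul_tmul']
    | add x y hx hy => simp only [smul_add, map_add, hx, hy]

@[simp]
theorem conj_tmul (c : ℂ) (w : W) : conj (c ⊗ₜ[ℝ] w) = (starRingEnd ℂ c) ⊗ₜ w := rfl

@[simp]
theorem conj_conj (x : ℂ ⊗[ℝ] W) : conj (conj x) = x := by
  induction x with
  | zero => simp
  | tmul c w => simp
  | add x y hx hy => simp only [map_add, hx, hy]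

theorem mem_map_conj_iff {L : Submodule ℂ (ℂ ⊗[ℝ] W)} {x : ℂ ⊗[ℝ] W} :
    x ∈ L.map conj ↔ conj x ∈ L :=
  ⟨by rintro ⟨y, hy, rfl⟩; simpa using hy, fun hx => ⟨conj x, hx, conj_conj x⟩⟩

theorem finrank_map_conj (L : Submodule ℂ (ℂ ⊗[ℝ] W)) :
    finrank ℂ (L.map conj) = finrank ℂ L := by
  let e := L.equivMapOfInjective conj (Function.LeftInverse.injective conj_conj)
  exact congrArg Cardinal.toNat (rank_eq_of_equiv_equiv (starRingEnd ℂ) e.toAddEquiv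
    (Function.Involutive.bijective Complex.conj_conj) e.map_smulₛₗ).symm

def re : ℂ ⊗[ℝ] W →ₗ[ℝ] W :=
  TensorProduct.lid ℝ W ∘ₗ reLm.rTensor W

@[simp]
theorem re_tmul (c : ℂ) (w : W) : re (c ⊗ₜ[ℝ] w) = c.re • w := rfl

theorem one_tmul_injective : Function.Injective fun w : W => (1 : ℂ) ⊗ₜ[ℝ] w :=
  Function.LeftInverse.injective (g := re) fun w => by simp

theorem add_conj (x : ℂ ⊗[ℝ] W) : x + conj x = (2 : ℝ) • (1 : ℂ) ⊗ₜ re x := by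
  induction x with
  | zero => simp
  | tmul c w =>
    simp [← TensorProduct.add_tmul, Complex.add_conj, TensorProduct.smul_tmul']
  | add x y hx hy =>
    simp only [map_add, TensorProduct.tmul_add, smul_add, ← hx, ← hy]; abel

theorem eq_one_tmul_re_of_conj_eq {x : ℂ ⊗[ℝ] W} (hx : conj x = x) : x = (1 : ℂ) ⊗ₜ re x := by
  have h := add_conj x
  rw [hx, ← two_smul ℝ] at h
  exact smul_right_injective _ two_ne_zero h

theorem conj_baseChange (J : W →ₗ[ℝ] W) (x : ℂ ⊗[ℝ] W) :
    conj (J.baseChange ℂ x) = J.baseChange ℂ (conj x) := by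
  induction x with
  | zero => simp
  | tmul c w => simp
  | add x y hx hy => simp only [map_add, hx, hy]

theorem baseChange_injective :
    Function.Injective (LinearMap.baseChange ℂ : (W →ₗ[ℝ] W) → ℂ ⊗[ℝ] W →ₗ[ℂ] ℂ ⊗[ℝ] W) :=
  fun J K hJK => LinearMap.ext fun w => one_tmul_injective <| by
    simpa using LinearMap.congr_fun hJK (1 ⊗ₜ w)

theorem exists_baseChange_eq {T : ℂ ⊗[ℝ] W →ₗ[ℂ] ℂ ⊗[ℝ] W}
    (hT : ∀ x, T (conj x) = conj (T x)) : ∃ J : W →ₗ[ℝ] W, J.baseChange ℂ = T := by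
  refine ⟨re ∘ₗ T.restrictScalars ℝ ∘ₗ TensorProduct.mk ℝ ℂ W 1, ?_⟩
  ext w
  have hreal : conj (T (1 ⊗ₜ w)) = T (1 ⊗ₜ w) := by rw [← hT]; simp
  simpa using (eq_one_tmul_re_of_conj_eq hreal).symm

theorem baseChange_conj (B : LinearMap.BilinForm ℝ W) (x y : ℂ ⊗[ℝ] W) :
    B.baseChange ℂ (conj x) (conj y) = starRingEnd ℂ (B.baseChange ℂ x y) := by
  induction x with
  | zero => simp
  | add x₁ x₂ h₁ h₂ => simp only [map_add, LinearMap.add_apply, h₁, h₂]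
  | tmul c v =>
    induction y with
    | zero => simp
    | add y₁ y₂ h₁ h₂ => simp only [map_add, h₁, h₂]
    | tmul d w => simp [LinearMap.BilinForm.baseChange_tmul, Complex.real_smul]

theorem baseChange_one_tmul (B : LinearMap.BilinForm ℝ W) (v w : W) :
    B.baseChange ℂ (1 ⊗ₜ v) (1 ⊗ₜ w) = B v w := by
  simp [LinearMap.BilinForm.baseChange_tmul, Complex.real_smul]

variable {L : Submodule ℂ (ℂ ⊗[ℝ] W)}

theorem isCompl_map_conj [FiniteDimensional ℝ W] (hdim : finrank ℝ W = 2 * finrank ℂ L)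
    (hdisj : Disjoint L (L.map conj)) : IsCompl L (L.map conj) := by
  refine (Submodule.isCompl_iff_disjoint _ _ ?_).2 hdisj
  rw [finrank_map_conj, Module.finrank_baseChange]
  omega

theorem isotropic_map_conj {B : LinearMap.BilinForm ℝ W}
    (hiso : ∀ x ∈ L, ∀ y ∈ L, B.baseChange ℂ x y = 0) :
    ∀ x ∈ L.map conj, ∀ y ∈ L.map conj, B.baseChange ℂ x y = 0 := by
  intro x hx y hy
  rw [← conj_conj x, ← conj_conj y, baseChange_conj,
    hiso _ (mem_map_conj_iff.1 hx) _ (mem_map_conj_iff.1 hy), map_zero]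

theorem complexStructureOfIsCompl_conj (h : IsCompl L (L.map conj)) (x : ℂ ⊗[ℝ] W) :
    complexStructureOfIsCompl h (conj x) = conj (complexStructureOfIsCompl h x) := by
  -- `conj ∘ T ∘ conj` is again `ℂ`-linear, with the same eigenspaces as `T`.
  let S : ℂ ⊗[ℝ] W →ₗ[ℂ] ℂ ⊗[ℝ] W := (conj.comp (complexStructureOfIsCompl h)).comp conj
  have hS : S = complexStructureOfIsCompl h := by
    refine eq_complexStructureOfIsCompl h (fun y hy => ?_) (fun y hy => ?_)
    · have : conj y ∈ L.map conj := mem_map_conj_iff.2 (by simpa using hy)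
      simp [S, complexStructureOfIsCompl_of_mem_right h this]
    · simp [S, complexStructureOfIsCompl_of_mem_left h (mem_map_conj_iff.1 hy)]
  conv_lhs => rw [← hS]
  simp [S]

theorem baseChange_eq_complexStructureOfIsCompl (h : IsCompl L (L.map conj)) {J : W →ₗ[ℝ] W}
    (hJ : ∀ x ∈ L, J.baseChange ℂ x = I • x) : J.baseChange ℂ = complexStructureOfIsCompl h := by
  refine eq_complexStructureOfIsCompl h hJ fun x hx => ?_
  rw [← conj_conj x, ← conj_baseChange, hJ _ (mem_map_conj_iff.1 hx)]
  simp

theorem existsUnique_complexStructure [FiniteDimensional ℝ W] (B : LinearMap.BilinForm ℝ W)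
    (hiso : ∀ x ∈ L, ∀ y ∈ L, B.baseChange ℂ x y = 0) (hdim : finrank ℝ W = 2 * finrank ℂ L)
    (hdisj : Disjoint L (L.map conj)) :
    ∃! J : W →ₗ[ℝ] W, (∀ v w, B (J v) (J w) = B v w) ∧ (∀ v, J (J v) = -v) ∧
      ∀ x, x ∈ L ↔ J.baseChange ℂ x = I • x := by
  have h := isCompl_map_conj hdim hdisj
  obtain ⟨J, hJ⟩ := exists_baseChange_eq (complexStructureOfIsCompl_conj h)
  refine ⟨J, ⟨fun v w => ?_, fun v => ?_, fun x => ?_⟩, fun K hK => ?_⟩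
  · have := complexStructureOfIsCompl_isometry h _ hiso (isotropic_map_conj hiso)
      (1 ⊗ₜ v) (1 ⊗ₜ w)
    rw [← hJ] at this
    simpa [baseChange_one_tmul] using this
  · apply one_tmul_injective
    have := complexStructureOfIsCompl_apply_apply h (1 ⊗ₜ v)
    rw [← hJ] at this
    simpa [TensorProduct.tmul_neg] using this
  · rw [hJ]
    exact mem_iff_complexStructureOfIsCompl_eq h x
  · exact baseChange_injective <| (baseChange_eq_complexStructureOfIsCompl h
      fun x hx => (hK.2.2 x).1 hx).trans hJ.symm

end Complexification

theorem maximal_isotropic_determines_unique_gacs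
    (V : Type*) [AddCommGroup V] [Module ℝ V] [FiniteDimensional ℝ V]
    (L : Submodule ℂ (WC V))
    -- L is maximal isotropic:
    (hiso : ∀ x ∈ L, ∀ y ∈ L, naturalPairingC V x y = 0)
    (hmax : Module.finrank ℂ L = Module.finrank ℝ V)
    -- L ∩ L̄ = 0:
    (hreal : (L : Set (WC V)) ∩ (conjW V '' (L : Set (WC V))) = {0}) :
    ∃! J : (V × Module.Dual ℝ V) →ₗ[ℝ] (V × Module.Dual ℝ V),
      (∀ v w, naturalPairing V (J v) (J w) = naturalPairing V v w) ∧
      (∀ v, J (J v) = -v) ∧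
      (∀ x : WC V, x ∈ L ↔ cplx J x = Complex.I • x) := by
  have hdim : finrank ℝ (V × Module.Dual ℝ V) = 2 * finrank ℂ L := by
    rw [finrank_prod, Subspace.dual_finrank_eq, hmax, two_mul]
  have hdisj : Disjoint L (L.map Complexification.conj) := by
    rw [Submodule.disjoint_def]
    intro x hxL hxL'
    have : x ∈ (L : Set (WC V)) ∩ (conjW V '' (L : Set (WC V))) := ⟨hxL, hxL'⟩
    rwa [hreal] at this
  exact Complexification.existsUnique_complexStructure (naturalPairing V) hiso hdim hdisj

end
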